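/- arXiv:2507.19630 — 2 statements merged into one kernel-verified Lean document; each statement's English description precedes it below -/
import Mathlib

section
/- If κ ⊩ u =_E v is derivable in a graded equational theory E over a Lawverean quantale, then κ ⊩ t[u]_p =_E t[v]_p is derivable for any term t and position p of t. -/
/-! Graded terms over a `Φ`-graded signature: each function symbol carries a modal arity,
a list of quantale endomorphisms (one per argument). -/

/-- A graded signature: function symbols together with their modal arities,
lists of maps `Ω → Ω` (intended to be quantale endomorphisms, CBEs). -/
structure GradedSig (Ω : Type*) where
  Sym : Type
  arity : Sym → List (Ω → Ω)

/-- First-order terms over a graded signature, with variables indexed by `ℕ`. -/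
inductive GTerm {Ω : Type*} (F : GradedSig Ω) : Type
  | var : ℕ → GTerm F
  | app : (f : F.Sym) → (Fin (F.arity f).length → GTerm F) → GTerm F

namespace GTerm

variable {Ω : Type*} {F : GradedSig Ω}

/-- The subterm of `t` at position `p` (`none` if `p` is not a position of `t`). -/
def subtermAt : GTerm F → List ℕ → Option (GTerm F)
  | t, [] => some t
  | var _, _ :: _ => none
  | app f args, i :: p =>
      if h : i < (F.arity f).length then subtermAt (args ⟨i, h⟩) p else none

/-- `replaceAt t p u` is `t[u]_p`, the replacement of the subterm of `t` at `p` by `u`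
(returning `t` unchanged on the illegal cases). -/
def replaceAt : GTerm F → List ℕ → GTerm F → GTerm F
  | _, [], u => u
  | var v, _ :: _, _ => var v
  | app f args, i :: p, u =>
      app f (fun j => if (j : ℕ) = i then replaceAt (args j) p u else args j)

/-- The grade `∂_p(t)` of position `p` in term `t`: the composition of the modal grades
along `p`, with `∂_λ(t) = id` and `∂_{i.p}(f(t₁,…,tₙ)) = φᵢ ∘ ∂_p(tᵢ)`. -/
def gradeAt : GTerm F → List ℕ → (Ω → Ω)
  | _, [] => id
  | var _, _ :: _ => id
  | app f args, i :: p =>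
      if h : i < (F.arity f).length then
        ((F.arity f).get ⟨i, h⟩) ∘ gradeAt (args ⟨i, h⟩) p
      else id

/-- Application of a substitution `σ : ℕ → GTerm F` to a term. -/
def subst (σ : ℕ → GTerm F) : GTerm F → GTerm F
  | var v => σ v
  | app f args => app f (fun j => subst σ (args j))

/-- The set of variables of a term. -/
def vars : GTerm F → Set ℕ
  | var v => {v}
  | app _ args => ⋃ j, vars (args j)

/-- The set of positions of a term. -/
def Pos (t : GTerm F) : Set (List ℕ) := {p | (subtermAt t p).isSome}

/-- The set of non-variable (function symbol) positions of a term. -/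
def FunPos (t : GTerm F) : Set (List ℕ) :=
  {p | ∃ f args, subtermAt t p = some (app f args)}

/-- A term is linear if no variable occurs at two distinct positions. -/
def Linear (t : GTerm F) : Prop :=
  ∀ v p q, subtermAt t p = some (var v) → subtermAt t q = some (var v) → p = q

end GTerm

/-- A quantale endomorphism (change-of-base endofunctor, CBE): a monotone map preserving
the unit, the tensor, and arbitrary joins. -/
def IsCBE {Ω : Type*} [Monoid Ω] [CompleteLattice Ω] (φ : Ω → Ω) : Prop :=
  Monotone φ ∧ φ 1 = 1 ∧ (∀ a b : Ω, φ (a * b) = φ a * φ b) ∧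
    ∀ s : Set Ω, φ (sSup s) = sSup (φ '' s)

/-- A `Φ`-graded signature is one whose modal arities consist of CBEs. -/
def GradedSig.IsCBESig {Ω : Type*} [Monoid Ω] [CompleteLattice Ω] (F : GradedSig Ω) : Prop :=
  ∀ f : F.Sym, ∀ φ ∈ F.arity f, IsCBE φ

/-- A (commutative unital) quantale is Lawverean if it is integral (`κ = ⊤`),
cointegral (`ε ⊗ δ = ⊥` implies `ε = ⊥` or `δ = ⊥`), and nontrivial (`κ ≠ ⊥`). -/
def Lawverean (Ω : Type*) [CommMonoid Ω] [CompleteLattice Ω] : Prop :=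
  (1 : Ω) = ⊤ ∧ (∀ a b : Ω, a * b = ⊥ → a = ⊥ ∨ b = ⊥) ∧ (1 : Ω) ≠ ⊥
/-- The graded quantitative equational theory `=_E` generated by a set `E` of
`Ω`-equalities `(t, ε, s)`, closed under the rules (Ax), (Refl), (Sym), (Trans),
(Ampl), (Subst), (Ord), and (Join). -/
inductive EqDeriv {Ω : Type*} [CommMonoid Ω] [CompleteLattice Ω] (F : GradedSig Ω)
    (E : Set (GTerm F × Ω × GTerm F)) : Ω → GTerm F → GTerm F → Prop
  | ax {t ε s} : (t, ε, s) ∈ E → EqDeriv F E ε t s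
  | refl (t) : EqDeriv F E 1 t t
  | symm {ε t s} : EqDeriv F E ε t s → EqDeriv F E ε s t
  | trans {ε δ t s r} : EqDeriv F E ε t s → EqDeriv F E δ s r → EqDeriv F E (ε * δ) t r
  | ampl (f : F.Sym) (ts ss : Fin (F.arity f).length → GTerm F)
      (εs : Fin (F.arity f).length → Ω) :
      (∀ j, EqDeriv F E (εs j) (ts j) (ss j)) →
      EqDeriv F E (List.ofFn (fun j => (F.arity f).get j (εs j))).prod
        (GTerm.app f ts) (GTerm.app f ss)
  | subst {ε t s} (σ : ℕ → GTerm F) :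
      EqDeriv F E ε t s → EqDeriv F E ε (t.subst σ) (s.subst σ)
  | ord {ε δ t s} : EqDeriv F E ε t s → δ ≤ ε → EqDeriv F E δ t s
  | join {ε δ t s} : EqDeriv F E ε t s → EqDeriv F E δ t s → EqDeriv F E (ε ⊔ δ) t s

/-! Induction on the position, strengthened to an arbitrary grade `ε`, which the context
transforms into `∂_p(t)(ε)`: one step is (Ampl) with grade `ε` at the replaced argument and
`κ` (by (Refl)) elsewhere, and CBEs fix `κ`; the same fact gives `∂_p(t)(κ) = κ`. -/

namespace GTerm

theorem mem_Pos_cons_iff {Ω : Type*} {F : GradedSig Ω} {f : F.Sym}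
    {args : Fin (F.arity f).length → GTerm F} {i : ℕ} {p : List ℕ} :
    i :: p ∈ (app f args).Pos ↔ ∃ hi : i < (F.arity f).length, p ∈ (args ⟨i, hi⟩).Pos := by
  simp only [Pos, Set.mem_ofPred_eq, subtermAt]
  split_ifs with hi <;> simp [hi]

theorem gradeAt_one {Ω : Type*} [Monoid Ω] [CompleteLattice Ω] {F : GradedSig Ω}
    (hF : F.IsCBESig) : ∀ (t : GTerm F) (p : List ℕ), t.gradeAt p 1 = 1
  | t, [] => by cases t <;> rfl
  | var _, _ :: _ => rfl
  | app f args, i :: p => by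
    unfold gradeAt
    split_ifs with hi
    · rw [Function.comp_apply, gradeAt_one hF, (hF f _ (List.get_mem _ _)).2.1]
    · rfl

end GTerm

namespace EqDeriv

variable {Ω : Type*} [CommMonoid Ω] [CompleteLattice Ω] {F : GradedSig Ω}
  {E : Set (GTerm F × Ω × GTerm F)}

theorem app_of_eq_of_ne (hF : F.IsCBESig) {f : F.Sym} (i : Fin (F.arity f).length)
    {ts ss : Fin (F.arity f).length → GTerm F} {ε : Ω} (hi : EqDeriv F E ε (ts i) (ss i))
    (hne : ∀ j, j ≠ i → ts j = ss j) :
    EqDeriv F E ((F.arity f).get i ε) (GTerm.app f ts) (GTerm.app f ss) := by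
  have grades := EqDeriv.ampl (E := E) f ts ss (Function.update 1 i ε) fun j => by
    rcases eq_or_ne j i with rfl | hj
    · simpa using hi
    · simpa [hj, hne j hj] using EqDeriv.refl (ss j)
  rwa [List.prod_ofFn, Finset.prod_eq_single i (fun j _ hj => by
      simp [hj, (hF f _ (List.get_mem _ j)).2.1]) (by simp), Function.update_self] at grades

/-- The graded context rule. -/
theorem replaceAt (hF : F.IsCBESig) {ε : Ω} {u v : GTerm F} (h : EqDeriv F E ε u v) :
    ∀ {t : GTerm F} {p : List ℕ}, p ∈ t.Pos →
      EqDeriv F E (t.gradeAt p ε) (t.replaceAt p u) (t.replaceAt p v)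
  | t, [], _ => by cases t <;> exact h
  | .var _, _ :: _, hp => by simp [GTerm.Pos, GTerm.subtermAt] at hp
  | .app f args, i :: p, hp => by
    obtain ⟨hi, hp⟩ := GTerm.mem_Pos_cons_iff.mp hp
    simp only [GTerm.gradeAt, dif_pos hi, Function.comp_apply, GTerm.replaceAt]
    refine app_of_eq_of_ne hF ⟨i, hi⟩ ?_ fun j hj => ?_
    · simpa using replaceAt hF h hp
    · simp [Fin.ext_iff.not.mp hj]

end EqDeriv

theorem graded_replacement_in_context_general {Ω : Type*} [CommMonoid Ω] [CompleteLattice Ω]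
    {F : GradedSig Ω} (hF : F.IsCBESig)
    (E : Set (GTerm F × Ω × GTerm F)) {u v t : GTerm F} {p : List ℕ}
    (hp : p ∈ GTerm.Pos t) (h : EqDeriv F E 1 u v) :
    EqDeriv F E 1 (GTerm.replaceAt t p u) (GTerm.replaceAt t p v) := by
  simpa only [GTerm.gradeAt_one hF] using EqDeriv.replaceAt hF h hp

/-- If `κ ⊩ u =_E v` is derivable in a graded equational theory `E` over a Lawverean
quantale, then `κ ⊩ t[u]_p =_E t[v]_p` is derivable for any term `t` and position `p`
of `t`. -/
theorem graded_replacement_in_context {Ω : Type*} [CommMonoid Ω] [CompleteLattice Ω]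
    [IsQuantale Ω] (hΩ : Lawverean Ω) {F : GradedSig Ω} (hF : F.IsCBESig)
    (E : Set (GTerm F × Ω × GTerm F)) {u v t : GTerm F} {p : List ℕ}
    (hp : p ∈ GTerm.Pos t) (h : EqDeriv F E 1 u v) :
    EqDeriv F E 1 (GTerm.replaceAt t p u) (GTerm.replaceAt t p v) :=
  graded_replacement_in_context_general hF E hp h
end

section
/- Lifting lemma for ordinary graded narrowing: let R be a right-linear (Ω,Φ)-TRS over a Lawverean quantale, t a linear term, and τ a substitution. If tτ →*_{R,ε} s, then there exists a narrowing derivation t ⤳*_{R,σ,δ} s' with δ ≽ ε and s' an instance-generalization of s (i.e., s'χ = s for some substitution χ). -/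
/-- An `(Ω,Φ)`-term rewriting system: every rule `ε ⊩ l ↦ r` has a non-variable
left-hand side and `Var(r) ⊆ Var(l)`. -/
def IsTRS {Ω : Type*} {F : GradedSig Ω} (R : Set (GTerm F × Ω × GTerm F)) : Prop :=
  ∀ l ε r, (l, ε, r) ∈ R → (∀ v, l ≠ GTerm.var v) ∧ GTerm.vars r ⊆ GTerm.vars l

/-- One-step graded rewriting: from a rule `δ ⊩ l ↦ r` infer
`∂_p(t)(δ) ⊩ t = t[lσ]_p → t[rσ]_p`. -/
def Rew {Ω : Type*} {F : GradedSig Ω} (R : Set (GTerm F × Ω × GTerm F))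
    (ε : Ω) (t s : GTerm F) : Prop :=
  ∃ (l : GTerm F) (δ : Ω) (r : GTerm F) (σ : ℕ → GTerm F) (p : List ℕ), (l, δ, r) ∈ R ∧
    GTerm.subtermAt t p = some (GTerm.subst σ l) ∧
    s = GTerm.replaceAt t p (GTerm.subst σ r) ∧
    ε = GTerm.gradeAt t p δ

/-- Graded reflexive-transitive closure of the symmetric rewrite relation
`↔_R = →_R ∪ ←_R`, combining degrees of consecutive steps by `⊗`
(with the unit `κ` for zero steps): graded convertibility `t ↔*_{R,ε} s`. -/
inductive ConvStar {Ω : Type*} [Monoid Ω] {F : GradedSig Ω}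
    (R : Set (GTerm F × Ω × GTerm F)) : Ω → GTerm F → GTerm F → Prop
  | refl (t) : ConvStar R 1 t t
  | step {ε δ t u s} : (Rew R ε t u ∨ Rew R ε u t) → ConvStar R δ u s →
      ConvStar R (ε * δ) t s

/-- Graded multi-step rewriting `t →*_{R,ε} s`, combining degrees by `⊗`. -/
inductive RewStar {Ω : Type*} [Monoid Ω] {F : GradedSig Ω}
    (R : Set (GTerm F × Ω × GTerm F)) : Ω → GTerm F → GTerm F → Prop
  | refl (t) : RewStar R 1 t t
  | step {ε δ t u s} : Rew R ε t u → RewStar R δ u s → RewStar R (ε * δ) t s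
/-- `σ` is a (syntactic) unifier of `u` and `v`. -/
def IsUnifier {Ω : Type*} {F : GradedSig Ω} (σ : ℕ → GTerm F) (u v : GTerm F) : Prop :=
  GTerm.subst σ u = GTerm.subst σ v

/-- `σ` is a most general (syntactic) unifier of `u` and `v`. -/
def IsMGU {Ω : Type*} {F : GradedSig Ω} (σ : ℕ → GTerm F) (u v : GTerm F) : Prop :=
  IsUnifier σ u v ∧
    ∀ τ : ℕ → GTerm F, IsUnifier τ u v →
      ∃ ρ : ℕ → GTerm F, ∀ x, GTerm.subst ρ (σ x) = τ x

/-- The substitution renaming variables along `π`. -/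
def renameBy {Ω : Type*} {F : GradedSig Ω} (π : ℕ → ℕ) : ℕ → GTerm F :=
  fun v => GTerm.var (π v)

/-- The data of a single narrowing step: the position used, the (renamed-apart) rule
`deg ⊩ lhs ↦ rhs`, and the most general unifier applied. -/
structure NStep (Ω : Type*) (F : GradedSig Ω) where
  pos : List ℕ
  lhs : GTerm F
  rhs : GTerm F
  deg : Ω
  mgu : ℕ → GTerm F

/-- Validity of a narrowing step `st` from term `t` with respect to `R`:
`st.pos` is a non-variable position of `t`; the rule `st.deg ⊩ st.lhs ↦ st.rhs` is a
renamed-apart variant of a rule of `R` sharing no variables with `t`; and `st.mgu` is a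
most general syntactic unifier of `t|_{st.pos}` and `st.lhs`. -/
def StepOK {Ω : Type*} {F : GradedSig Ω} (R : Set (GTerm F × Ω × GTerm F))
    (t : GTerm F) (st : NStep Ω F) : Prop :=
  st.pos ∈ GTerm.FunPos t ∧
  (∃ (l₀ r₀ : GTerm F) (π : ℕ → ℕ), Function.Injective π ∧ (l₀, st.deg, r₀) ∈ R ∧
    st.lhs = GTerm.subst (renameBy π) l₀ ∧ st.rhs = GTerm.subst (renameBy π) r₀ ∧
    (GTerm.vars st.lhs ∪ GTerm.vars st.rhs) ∩ GTerm.vars t = ∅) ∧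
  (∃ u, GTerm.subtermAt t st.pos = some u ∧ IsMGU st.mgu u st.lhs)

/-- The result `(t[rhs]_p)σ` of a narrowing step. -/
def nnext {Ω : Type*} {F : GradedSig Ω} (t : GTerm F) (st : NStep Ω F) : GTerm F :=
  GTerm.subst st.mgu (GTerm.replaceAt t st.pos st.rhs)

/-- Validity of a narrowing derivation from `t` given by a list of steps. -/
def ValidDeriv {Ω : Type*} {F : GradedSig Ω} (R : Set (GTerm F × Ω × GTerm F)) :
    GTerm F → List (NStep Ω F) → Prop
  | _, [] => True
  | t, st :: l => StepOK R t st ∧ ValidDeriv R (nnext t st) l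

/-- One step of the evolution of the set of basic positions:
`B_{i+1} = {q ∈ B_i | p_i ⋢ q} ∪ {p_i.q | q a non-variable position of r_i}`. -/
def basicNext {Ω : Type*} {F : GradedSig Ω} (B : Set (List ℕ)) (st : NStep Ω F) :
    Set (List ℕ) :=
  {q ∈ B | ¬ st.pos <+: q} ∪ {p | ∃ q ∈ GTerm.FunPos st.rhs, p = st.pos ++ q}

/-- The derivation given by `steps` is basic with respect to the initial set `B` of basic
positions: each narrowing position belongs to the current set of basic positions. -/
def BasicFrom {Ω : Type*} {F : GradedSig Ω} : Set (List ℕ) → List (NStep Ω F) → Prop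
  | _, [] => True
  | B, st :: l => st.pos ∈ B ∧ BasicFrom (basicNext B st) l

/-- Along the derivation, the set of basic positions of each intermediate term equals its
set of non-variable positions. -/
def BasicEqFunPos {Ω : Type*} {F : GradedSig Ω} :
    Set (List ℕ) → GTerm F → List (NStep Ω F) → Prop
  | B, t, [] => B = GTerm.FunPos t
  | B, t, st :: l => B = GTerm.FunPos t ∧ BasicEqFunPos (basicNext B st) (nnext t st) l

/-- One graded narrowing step `t ⤳_{R,σ,∂_p(t)(ε)} (t[rρ]_p)σ`. -/
def Narrow {Ω : Type*} {F : GradedSig Ω} (R : Set (GTerm F × Ω × GTerm F))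
    (σ : ℕ → GTerm F) (δ : Ω) (t s : GTerm F) : Prop :=
  ∃ st : NStep Ω F, StepOK R t st ∧ σ = st.mgu ∧
    δ = GTerm.gradeAt t st.pos st.deg ∧ s = nnext t st

/-- Multi-step graded narrowing `t ⤳*_{R,σ,δ} s`: degrees compose by `⊗` and
substitutions by composition (with the identity substitution and `κ` for zero steps). -/
inductive NarrowStar {Ω : Type*} [Monoid Ω] {F : GradedSig Ω}
    (R : Set (GTerm F × Ω × GTerm F)) :
    (ℕ → GTerm F) → Ω → GTerm F → GTerm F → Prop
  | refl (t) : NarrowStar R GTerm.var 1 t t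
  | step {σ₁ σ₂ : ℕ → GTerm F} {ε₁ ε₂ t u s} :
      Narrow R σ₁ ε₁ t u → NarrowStar R σ₂ ε₂ u s →
      NarrowStar R (fun v => GTerm.subst σ₂ (σ₁ v)) (ε₁ * ε₂) t s

/-! Induction on the rewrite sequence `tτ →* s`. A step below a variable position `x` of `t`
only changes `τ x`, because `t` is linear, so it is absorbed into `τ`; it costs nothing since
`ε₁ ⊗ ε₂ ≤ ε₂` when `κ = ⊤`. A step with rule `l ↦ r` at a non-variable position `p` of `t` is
lifted to a narrowing step of the same degree `∂_p(t)(ε)`, using a renamed-apart variant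
`l' ↦ r'` and a most general unifier `θ` of `t|_p` and `l'`. Since `t|_p` is linear and shares
no variable with `l'`, unification can be carried out so that `θ` is idempotent and sends the
variables outside `t|_p` to linear terms with pairwise disjoint variables. As `r'` is linear,
the narrowed term `(t[r']_p)θ` is then linear again, and idempotence of `θ` shows that the
rewritten term is still an instance of it. -/

namespace GTerm

variable {Ω : Type*} {F : GradedSig Ω}

@[simp] lemma subtermAt_nil (t : GTerm F) : subtermAt t [] = some t := by cases t <;> rfl

@[simp] lemma replaceAt_nil (t w : GTerm F) : replaceAt t [] w = w := by cases t <;> rfl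

@[simp] lemma gradeAt_nil (t : GTerm F) : gradeAt t [] = id := by cases t <;> rfl

@[simp] lemma subtermAt_var_cons (v i : ℕ) (p : List ℕ) :
    subtermAt (var v : GTerm F) (i :: p) = none := rfl

@[simp] lemma subtermAt_app_val_cons (f : F.Sym) (args : Fin (F.arity f).length → GTerm F)
    (j : Fin (F.arity f).length) (p : List ℕ) :
    subtermAt (app f args) ((j : ℕ) :: p) = subtermAt (args j) p := by
  simp [subtermAt]

lemma subtermAt_app_cons_eq_some {f : F.Sym} {args : Fin (F.arity f).length → GTerm F}
    {i : ℕ} {p : List ℕ} {u : GTerm F} :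
    subtermAt (app f args) (i :: p) = some u ↔
      ∃ j : Fin (F.arity f).length, (j : ℕ) = i ∧ subtermAt (args j) p = some u := by
  by_cases hi : i < (F.arity f).length
  · simp only [subtermAt, dif_pos hi]
    refine ⟨fun h => ⟨⟨i, hi⟩, rfl, h⟩, ?_⟩
    rintro ⟨j, rfl, h⟩
    exact h
  · simp only [subtermAt, dif_neg hi, reduceCtorEq, false_iff, not_exists, not_and]
    rintro j rfl
    exact absurd j.isLt hi

@[simp] lemma vars_var (v : ℕ) : vars (var v : GTerm F) = {v} := rfl

@[simp] lemma vars_app (f : F.Sym) (args : Fin (F.arity f).length → GTerm F) :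
    vars (app f args) = ⋃ j, vars (args j) := rfl

@[simp] lemma subst_var (σ : ℕ → GTerm F) (v : ℕ) : subst σ (var v) = σ v := rfl

@[simp] lemma subst_app (σ : ℕ → GTerm F) (f : F.Sym) (args : Fin (F.arity f).length → GTerm F) :
    subst σ (app f args) = app f (fun j => subst σ (args j)) := rfl

lemma subst_subst (σ θ : ℕ → GTerm F) (t : GTerm F) :
    subst σ (subst θ t) = subst (fun x => subst σ (θ x)) t := by
  induction t with
  | var v => rfl
  | app f args ih => simp [ih]

lemma subst_congr {σ σ' : ℕ → GTerm F} {t : GTerm F} (h : ∀ x ∈ vars t, σ x = σ' x) :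
    subst σ t = subst σ' t := by
  induction t with
  | var v => exact h v rfl
  | app f args ih =>
      simp only [subst_app, app.injEq, heq_eq_eq, true_and]
      exact funext fun j => ih j fun x hx => h x (Set.mem_iUnion_of_mem j hx)

lemma subst_eq_self {σ : ℕ → GTerm F} {t : GTerm F} (h : ∀ x ∈ vars t, σ x = var x) :
    subst σ t = t := by
  induction t with
  | var v => exact h v rfl
  | app f args ih =>
      simp only [subst_app, app.injEq, heq_eq_eq, true_and]
      exact funext fun j => ih j fun x hx => h x (Set.mem_iUnion_of_mem j hx)

lemma mem_vars_subst {σ : ℕ → GTerm F} {t : GTerm F} {y : ℕ} :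
    y ∈ vars (subst σ t) ↔ ∃ x ∈ vars t, y ∈ vars (σ x) := by
  induction t with
  | var v => simp
  | app f args ih =>
      simp only [subst_app, vars_app, Set.mem_iUnion, ih]
      exact ⟨fun ⟨j, x, hx, hy⟩ => ⟨x, ⟨j, hx⟩, hy⟩, fun ⟨x, ⟨j, hx⟩, hy⟩ => ⟨j, x, hx, hy⟩⟩

lemma mem_vars_iff {x : ℕ} {t : GTerm F} : x ∈ vars t ↔ ∃ p, subtermAt t p = some (var x) := by
  induction t with
  | var v =>
      constructor
      · rintro rfl
        exact ⟨[], rfl⟩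
      · rintro ⟨_ | ⟨i, p⟩, hp⟩
        · simp only [subtermAt_nil, Option.some.injEq, var.injEq] at hp
          exact hp.symm
        · simp at hp
  | app f args ih =>
      simp only [vars_app, Set.mem_iUnion, ih]
      constructor
      · rintro ⟨j, p, hp⟩
        exact ⟨j :: p, by simpa using hp⟩
      · rintro ⟨_ | ⟨i, p⟩, hp⟩
        · simp at hp
        · obtain ⟨j, -, hj⟩ := subtermAt_app_cons_eq_some.1 hp
          exact ⟨j, p, hj⟩

lemma mem_vars_of_subtermAt {x : ℕ} {t : GTerm F} {p : List ℕ}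
    (h : subtermAt t p = some (var x)) : x ∈ vars t :=
  mem_vars_iff.2 ⟨p, h⟩

lemma exists_lt_of_mem_vars (t : GTerm F) : ∃ N, ∀ v ∈ vars t, v < N := by
  induction t with
  | var v => exact ⟨v + 1, by simp⟩
  | app f args ih =>
      choose B hB using ih
      refine ⟨Finset.univ.sup B, fun v hv => ?_⟩
      obtain ⟨j, hj⟩ := Set.mem_iUnion.1 hv
      exact (hB j v hj).trans_le (Finset.le_sup (Finset.mem_univ j))

lemma subtermAt_append_of_eq {t u : GTerm F} {p : List ℕ} (h : subtermAt t p = some u)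
    (q : List ℕ) : subtermAt t (p ++ q) = subtermAt u q := by
  induction p generalizing t with
  | nil => simp_all
  | cons i p ih =>
      cases t with
      | var v => simp at h
      | app f args =>
          obtain ⟨j, rfl, hj⟩ := subtermAt_app_cons_eq_some.1 h
          simpa using ih hj

lemma vars_subset_of_subtermAt {t u : GTerm F} {p : List ℕ} (h : subtermAt t p = some u) :
    vars u ⊆ vars t := fun x hx => by
  obtain ⟨q, hq⟩ := mem_vars_iff.1 hx
  exact mem_vars_of_subtermAt (p := p ++ q) (by rw [subtermAt_append_of_eq h, hq])

lemma subtermAt_subst {t u : GTerm F} {p : List ℕ} (σ : ℕ → GTerm F)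
    (h : subtermAt t p = some u) : subtermAt (subst σ t) p = some (subst σ u) := by
  induction p generalizing t with
  | nil => simp_all
  | cons i p ih =>
      cases t with
      | var v => simp at h
      | app f args =>
          obtain ⟨j, rfl, hj⟩ := subtermAt_app_cons_eq_some.1 h
          simpa using ih hj

lemma gradeAt_subst {t u : GTerm F} {p : List ℕ} (h : subtermAt t p = some u)
    (σ : ℕ → GTerm F) : gradeAt (subst σ t) p = gradeAt t p := by
  induction p generalizing t with
  | nil => simp
  | cons i p ih =>
      cases t with
      | var v => simp at h
      | app f args =>
          obtain ⟨j, rfl, hj⟩ := subtermAt_app_cons_eq_some.1 h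
          simp [gradeAt, ih hj]

lemma subst_replaceAt {t u : GTerm F} {p : List ℕ} (h : subtermAt t p = some u)
    (σ : ℕ → GTerm F) (w : GTerm F) :
    subst σ (replaceAt t p w) = replaceAt (subst σ t) p (subst σ w) := by
  induction p generalizing t with
  | nil => simp
  | cons i p ih =>
      cases t with
      | var v => simp at h
      | app f args =>
          obtain ⟨j, rfl, hj⟩ := subtermAt_app_cons_eq_some.1 h
          simp only [replaceAt, subst_app, app.injEq, heq_eq_eq, true_and]
          funext k
          split_ifs with hk
          · rw [Fin.ext hk, ih hj]
          · rfl

lemma subtermAt_subst_eq_some {t w : GTerm F} {τ : ℕ → GTerm F} {p : List ℕ}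
    (h : subtermAt (subst τ t) p = some w) :
    (∃ f args, subtermAt t p = some (app f args)) ∨
      ∃ p₁ p₂ x, p = p₁ ++ p₂ ∧ subtermAt t p₁ = some (var x) ∧
        subtermAt (τ x) p₂ = some w := by
  induction t generalizing p with
  | var x => exact .inr ⟨[], p, x, rfl, rfl, h⟩
  | app f args ih =>
      rcases p with _ | ⟨i, p⟩
      · exact .inl ⟨f, args, rfl⟩
      obtain ⟨j, rfl, hj⟩ := subtermAt_app_cons_eq_some.1 h
      rcases ih j hj with ⟨g, a, hg⟩ | ⟨p₁, p₂, x, rfl, hx, hw⟩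
      · exact .inl ⟨g, a, by simpa using hg⟩
      · exact .inr ⟨j :: p₁, p₂, x, rfl, by simpa using hx, hw⟩

lemma subtermAt_subst_eq_var {t : GTerm F} {σ : ℕ → GTerm F} {p : List ℕ} {v : ℕ}
    (h : subtermAt (subst σ t) p = some (var v)) :
    ∃ p₁ p₂ x, p = p₁ ++ p₂ ∧ subtermAt t p₁ = some (var x) ∧
      subtermAt (σ x) p₂ = some (var v) := by
  rcases subtermAt_subst_eq_some h with ⟨f, args, hp⟩ | h
  · simp [subtermAt_subst σ hp] at h
  · exact h

lemma subtermAt_replaceAt_eq_var {t w : GTerm F} {p q : List ℕ} {v : ℕ}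
    (h : subtermAt (replaceAt t p w) q = some (var v)) :
    (∃ r, q = p ++ r ∧ subtermAt w r = some (var v)) ∨
      (¬ p <+: q ∧ subtermAt t q = some (var v)) := by
  induction t generalizing p q with
  | var y =>
      rcases p with _ | ⟨i, p⟩
      · exact .inl ⟨q, rfl, by simpa using h⟩
      · rcases q with _ | ⟨k, q⟩
        · exact .inr ⟨by simp, h⟩
        · simp [replaceAt] at h
  | app f args ih =>
      rcases p with _ | ⟨i, p⟩
      · exact .inl ⟨q, rfl, by simpa using h⟩
      rcases q with _ | ⟨k, q⟩
      · simp [replaceAt] at h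
      obtain ⟨j, rfl, hj⟩ := subtermAt_app_cons_eq_some.1 h
      by_cases hji : (j : ℕ) = i
      · subst hji
        simp only [if_pos] at hj
        rcases ih j hj with ⟨r, rfl, hr⟩ | ⟨hpq, hq⟩
        · exact .inl ⟨r, rfl, hr⟩
        · exact .inr ⟨by simpa using hpq, by simpa using hq⟩
      · simp only [if_neg hji] at hj
        exact .inr ⟨fun ⟨_, hr⟩ => hji (List.cons.inj hr).1.symm, by simpa using hj⟩

lemma linear_var (v : ℕ) : Linear (var v : GTerm F) := by
  rintro x (_ | _) (_ | _) hp hq <;> simp_all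

lemma Linear.subterm {t u : GTerm F} (ht : Linear t) {p : List ℕ}
    (h : subtermAt t p = some u) : Linear u := fun v q₁ q₂ h₁ h₂ =>
  List.append_cancel_left <| ht v (p ++ q₁) (p ++ q₂)
    (by rw [subtermAt_append_of_eq h, h₁]) (by rw [subtermAt_append_of_eq h, h₂])

lemma Linear.arg {f : F.Sym} {args : Fin (F.arity f).length → GTerm F}
    (h : Linear (app f args)) (j : Fin (F.arity f).length) : Linear (args j) :=
  h.subterm (p := [j]) (by simp)

lemma Linear.disjoint_vars_args {f : F.Sym} {args : Fin (F.arity f).length → GTerm F}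
    (h : Linear (app f args)) {i j : Fin (F.arity f).length} (hij : i ≠ j) :
    Disjoint (vars (args i)) (vars (args j)) := by
  refine Set.disjoint_left.2 fun v hi hj => hij (Fin.ext ?_)
  obtain ⟨p, hp⟩ := mem_vars_iff.1 hi
  obtain ⟨q, hq⟩ := mem_vars_iff.1 hj
  exact (List.cons.inj (h v (i :: p) (j :: q) (by simpa using hp) (by simpa using hq))).1

lemma Linear.subst_of_disjoint {t : GTerm F} (ht : Linear t) {σ : ℕ → GTerm F}
    (hlin : ∀ x ∈ vars t, Linear (σ x))
    (hdisj : ∀ x ∈ vars t, ∀ y ∈ vars t, x ≠ y → Disjoint (vars (σ x)) (vars (σ y))) :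
    Linear (subst σ t) := by
  intro v p q hp hq
  obtain ⟨p₁, p₂, x, rfl, hx, hvx⟩ := subtermAt_subst_eq_var hp
  obtain ⟨q₁, q₂, y, rfl, hy, hvy⟩ := subtermAt_subst_eq_var hq
  obtain rfl | hxy := eq_or_ne x y
  · rw [ht x p₁ q₁ hx hy, hlin x (mem_vars_of_subtermAt hx) v p₂ q₂ hvx hvy]
  · exact absurd (mem_vars_of_subtermAt hvy) <| Set.disjoint_left.1
      (hdisj x (mem_vars_of_subtermAt hx) y (mem_vars_of_subtermAt hy) hxy)
      (mem_vars_of_subtermAt hvx)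

lemma Linear.replaceAt_of_disjoint {t w : GTerm F} (ht : Linear t) (hw : Linear w)
    (hd : Disjoint (vars t) (vars w)) (p : List ℕ) : Linear (replaceAt t p w) := by
  intro v q₁ q₂ h₁ h₂
  rcases subtermAt_replaceAt_eq_var h₁ with ⟨r₁, rfl, hw₁⟩ | ⟨-, ht₁⟩ <;>
    rcases subtermAt_replaceAt_eq_var h₂ with ⟨r₂, rfl, hw₂⟩ | ⟨-, ht₂⟩
  · rw [hw v r₁ r₂ hw₁ hw₂]
  · exact absurd (mem_vars_of_subtermAt hw₁)
      (Set.disjoint_left.1 hd (mem_vars_of_subtermAt ht₂))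
  · exact absurd (mem_vars_of_subtermAt hw₂)
      (Set.disjoint_left.1 hd (mem_vars_of_subtermAt ht₁))
  · exact ht v q₁ q₂ ht₁ ht₂

lemma Linear.mem_vars_replaceAt {t u w : GTerm F} (ht : Linear t) {p : List ℕ}
    (hu : subtermAt t p = some u) {x : ℕ} (hx : x ∈ vars (replaceAt t p w)) :
    x ∈ vars w ∨ (x ∈ vars t ∧ x ∉ vars u) := by
  obtain ⟨q, hq⟩ := mem_vars_iff.1 hx
  rcases subtermAt_replaceAt_eq_var hq with ⟨r, -, hr⟩ | ⟨hpq, htq⟩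
  · exact .inl (mem_vars_of_subtermAt hr)
  refine .inr ⟨mem_vars_of_subtermAt htq, fun hxu => hpq ?_⟩
  obtain ⟨r, hr⟩ := mem_vars_iff.1 hxu
  exact ht x _ (p ++ r) htq (by rw [subtermAt_append_of_eq hu, hr]) ▸ List.prefix_append p r

lemma Linear.replaceAt_subst_of_var {t : GTerm F} (ht : Linear t) {p₁ : List ℕ} {x : ℕ}
    (hx : subtermAt t p₁ = some (var x)) (τ : ℕ → GTerm F) (p₂ : List ℕ) (w : GTerm F) :
    replaceAt (subst τ t) (p₁ ++ p₂) w =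
      subst (Function.update τ x (replaceAt (τ x) p₂ w)) t := by
  induction t generalizing p₁ with
  | var y =>
      rcases p₁ with _ | ⟨i, p₁⟩
      · obtain rfl : y = x := by simpa using hx
        simp
      · simp at hx
  | app f args ih =>
      rcases p₁ with _ | ⟨i, p₁⟩
      · simp at hx
      obtain ⟨j, rfl, hj⟩ := subtermAt_app_cons_eq_some.1 hx
      simp only [subst_app, List.cons_append, replaceAt, app.injEq, heq_eq_eq, true_and]
      funext k
      split_ifs with hk
      · obtain rfl := Fin.ext hk
        exact ih k (ht.arg k) hj
      · refine (subst_congr fun z hz => ?_).symm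
        have hzx : z ≠ x := (ht.disjoint_vars_args (Fin.val_ne_iff.1 hk)).ne_of_mem hz
          (mem_vars_of_subtermAt hj)
        exact Function.update_of_ne hzx _ _

def size : GTerm F → ℕ
  | var _ => 1
  | app _ args => 1 + ∑ j, size (args j)

lemma one_le_size (t : GTerm F) : 1 ≤ size t := by
  cases t <;> simp [size]

def Unifies (μ : ℕ → GTerm F) (ps : List (GTerm F × GTerm F)) : Prop :=
  ∀ q ∈ ps, subst μ q.1 = subst μ q.2

def lhsVars (ps : List (GTerm F × GTerm F)) : Set ℕ := {x | ∃ q ∈ ps, x ∈ vars q.1}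

def rhsVars (ps : List (GTerm F × GTerm F)) : Set ℕ := {x | ∃ q ∈ ps, x ∈ vars q.2}

@[simp] lemma lhsVars_nil : lhsVars ([] : List (GTerm F × GTerm F)) = ∅ := by simp [lhsVars]

@[simp] lemma lhsVars_cons (q : GTerm F × GTerm F) (ps : List (GTerm F × GTerm F)) :
    lhsVars (q :: ps) = vars q.1 ∪ lhsVars ps := by
  ext; simp [lhsVars]

@[simp] lemma rhsVars_nil : rhsVars ([] : List (GTerm F × GTerm F)) = ∅ := by simp [rhsVars]

@[simp] lemma rhsVars_cons (q : GTerm F × GTerm F) (ps : List (GTerm F × GTerm F)) :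
    rhsVars (q :: ps) = vars q.2 ∪ rhsVars ps := by
  ext; simp [rhsVars]

/-- The unification problems met when unifying a linear term with a term sharing none of its
variables. -/
structure IsLinearProblem (ps : List (GTerm F × GTerm F)) : Prop where
  linear : ∀ q ∈ ps, Linear q.1
  pairwise_disjoint : ps.Pairwise fun a b => Disjoint (vars a.1) (vars b.1)
  disjoint : Disjoint (lhsVars ps) (rhsVars ps)

/-- An idempotent most general unifier (`absorb`) which maps the variables outside the
left-hand sides to linear terms with pairwise disjoint variables: this is what keeps narrowed
terms linear. -/
structure IsLinearMGU (ps : List (GTerm F × GTerm F)) (θ : ℕ → GTerm F) : Prop where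
  unifies : Unifies θ ps
  absorb : ∀ μ, Unifies μ ps → ∀ x, subst μ (θ x) = μ x
  eq_var : ∀ x, x ∉ lhsVars ps → x ∉ rhsVars ps → θ x = var x
  vars_subset : ∀ x, vars (θ x) ⊆ insert x (lhsVars ps ∪ rhsVars ps)
  linear : ∀ x, x ∉ lhsVars ps → Linear (θ x)
  disjoint : ∀ x y, x ∉ lhsVars ps → y ∉ lhsVars ps → x ≠ y →
    Disjoint (vars (θ x)) (vars (θ y))

section IsLinearMGU

variable {ps : List (GTerm F × GTerm F)} {θ : ℕ → GTerm F}

lemma IsLinearMGU.linear_subst (h : IsLinearMGU ps θ) {w : GTerm F} (hw : Linear w)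
    (hd : Disjoint (vars w) (lhsVars ps)) : Linear (subst θ w) :=
  hw.subst_of_disjoint (fun x hx => h.linear x (Set.disjoint_left.1 hd hx))
    fun x hx y hy => h.disjoint x y (Set.disjoint_left.1 hd hx) (Set.disjoint_left.1 hd hy)

lemma IsLinearMGU.disjoint_vars_subst (h : IsLinearMGU ps θ) {w w' : GTerm F}
    (hd : Disjoint (vars w) (lhsVars ps)) (hd' : Disjoint (vars w') (lhsVars ps))
    (hww' : Disjoint (vars w) (vars w')) :
    Disjoint (vars (subst θ w)) (vars (subst θ w')) := by
  refine Set.disjoint_left.2 fun y hy hy' => ?_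
  obtain ⟨x, hx, hyx⟩ := mem_vars_subst.1 hy
  obtain ⟨x', hx', hyx'⟩ := mem_vars_subst.1 hy'
  exact Set.disjoint_left.1 (h.disjoint x x' (Set.disjoint_left.1 hd hx)
    (Set.disjoint_left.1 hd' hx') (hww'.ne_of_mem hx hx')) hyx hyx'

lemma IsLinearMGU.subst_subst_of_unifies (h : IsLinearMGU ps θ) {μ : ℕ → GTerm F}
    (hμ : Unifies μ ps) (w : GTerm F) : subst μ (subst θ w) = subst μ w := by
  rw [subst_subst]
  exact subst_congr fun x _ => h.absorb μ hμ x

lemma IsLinearMGU.congr {qs : List (GTerm F × GTerm F)} (h : IsLinearMGU ps θ)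
    (hU : ∀ μ, Unifies μ ps ↔ Unifies μ qs) (hl : lhsVars ps = lhsVars qs)
    (hr : rhsVars ps = rhsVars qs) : IsLinearMGU qs θ where
  unifies := (hU θ).1 h.unifies
  absorb μ hμ := h.absorb μ ((hU μ).2 hμ)
  eq_var := hl ▸ hr ▸ h.eq_var
  vars_subset := hl ▸ hr ▸ h.vars_subset
  linear := hl ▸ h.linear
  disjoint := hl ▸ h.disjoint

lemma isLinearMGU_nil : IsLinearMGU [] (var : ℕ → GTerm F) where
  unifies := by simp [Unifies]
  absorb _ _ _ := rfl
  eq_var _ _ _ := rfl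
  vars_subset x := by simp
  linear x _ := linear_var x
  disjoint x y _ _ hxy := by simpa using hxy

end IsLinearMGU

section Bind

variable {y : ℕ} {w : GTerm F}

lemma subst_update_var_of_notMem (hy : y ∉ vars w) :
    subst (Function.update var y w) w = w :=
  subst_eq_self fun _ hx => Function.update_of_ne (ne_of_mem_of_not_mem hx hy) _ _

lemma subst_update_var_absorb {μ : ℕ → GTerm F} (hμ : subst μ w = μ y) (x : ℕ) :
    subst μ (Function.update var y w x) = μ x := by
  obtain rfl | hxy := eq_or_ne x y
  · simpa using hμ
  · simp [hxy]

lemma isLinearMGU_var_left (hy : y ∉ vars w) :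
    IsLinearMGU [(var y, w)] (Function.update var y w) where
  unifies := by simp [Unifies, subst_update_var_of_notMem hy]
  absorb μ hμ :=
    subst_update_var_absorb (by simpa [Unifies] using (hμ _ List.mem_cons_self).symm)
  eq_var x hx _ := Function.update_of_ne (by simpa using hx) _ _
  vars_subset x := by
    obtain rfl | hxy := eq_or_ne x y
    · simp +contextual [Set.subset_def]
    · simp [hxy]
  linear x hx := by
    rw [Function.update_of_ne (by simpa using hx)]
    exact linear_var x
  disjoint x x' hx hx' hxx' := by
    simp only [lhsVars_cons, lhsVars_nil, vars_var, Set.union_empty,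
      Set.mem_singleton_iff] at hx hx'
    simpa [Function.update_of_ne hx, Function.update_of_ne hx'] using hxx'

lemma isLinearMGU_var_right (hw : Linear w) (hy : y ∉ vars w) :
    IsLinearMGU [(w, var y)] (Function.update var y w) where
  unifies := by simp [Unifies, subst_update_var_of_notMem hy]
  absorb μ hμ := subst_update_var_absorb (by simpa [Unifies] using hμ _ List.mem_cons_self)
  eq_var x _ hx := Function.update_of_ne (by simpa using hx) _ _
  vars_subset x := by
    obtain rfl | hxy := eq_or_ne x y
    · simp +contextual [Set.subset_def]
    · simp [hxy]
  linear x _ := by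
    obtain rfl | hxy := eq_or_ne x y
    · simpa using hw
    · simpa [hxy] using linear_var x
  disjoint x x' hx hx' hxx' := by
    simp only [lhsVars_cons, lhsVars_nil, Set.union_empty] at hx hx'
    obtain rfl | hxy := eq_or_ne x y
    · simpa [hxx'.symm] using hx'
    obtain rfl | hxy' := eq_or_ne x' y
    · simpa [hxy] using hx
    · simpa [hxy, hxy'] using hxx'

end Bind

@[simp] lemma lhsVars_map_prodMap_id (g : GTerm F → GTerm F) (ps : List (GTerm F × GTerm F)) :
    lhsVars (ps.map (Prod.map id g)) = lhsVars ps := by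
  ext; simp [lhsVars]

section Cons

variable {u₀ v₀ : GTerm F} {tail : List (GTerm F × GTerm F)} {θ₁ θ₂ : ℕ → GTerm F}

lemma rhsVars_map_subst_subset (h₁ : IsLinearMGU [(u₀, v₀)] θ₁) :
    rhsVars (tail.map (Prod.map id (subst θ₁))) ⊆ vars u₀ ∪ rhsVars ((u₀, v₀) :: tail) := by
  rintro y ⟨_, hq, hy⟩
  rw [rhsVars_cons, Set.mem_union, Set.mem_union]
  obtain ⟨q, hq', rfl⟩ := List.mem_map.1 hq
  obtain ⟨x, hx, hyx⟩ := mem_vars_subst.1 hy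
  have := h₁.vars_subset x hyx
  simp only [lhsVars_cons, lhsVars_nil, rhsVars_cons, rhsVars_nil, Set.union_empty,
    Set.mem_insert_iff, Set.mem_union] at this
  rcases this with rfl | h | h
  · exact Or.inr (Or.inr ⟨q, hq', hx⟩)
  · exact Or.inl h
  · exact Or.inr (Or.inl h)

lemma Unifies.map_subst_tail (h₁ : IsLinearMGU [(u₀, v₀)] θ₁) {μ : ℕ → GTerm F}
    (hμ : Unifies μ ((u₀, v₀) :: tail)) : Unifies μ (tail.map (Prod.map id (subst θ₁))) := by
  have hμ₀ : Unifies μ [(u₀, v₀)] := fun q hq => hμ q (by simp_all)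
  simp only [Unifies, List.mem_map, forall_exists_index, and_imp, forall_apply_eq_imp_iff₂,
    Prod.map_fst, id_eq, Prod.map_snd, h₁.subst_subst_of_unifies hμ₀]
  exact fun q hq => hμ q (List.mem_cons_of_mem _ hq)

variable (hps : IsLinearProblem ((u₀, v₀) :: tail))
include hps

lemma IsLinearProblem.notMem_vars_head {x : ℕ} (hx : x ∈ lhsVars tail) :
    x ∉ vars u₀ ∧ x ∉ vars v₀ := by
  refine ⟨fun hu => ?_, fun hv => hps.disjoint.ne_of_mem (a := x) (b := x)
    (by rw [lhsVars_cons]; exact Or.inr hx) (by rw [rhsVars_cons]; exact Or.inl hv) rfl⟩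
  obtain ⟨q, hq, hxq⟩ := hx
  exact (List.pairwise_cons.1 hps.pairwise_disjoint).1 q hq |>.ne_of_mem hu hxq rfl

variable (h₁ : IsLinearMGU [(u₀, v₀)] θ₁)
include h₁

lemma IsLinearProblem.subst_fst_of_mem_tail {q : GTerm F × GTerm F} (hq : q ∈ tail) :
    subst θ₁ q.1 = q.1 :=
  subst_eq_self fun x hx =>
    have hx' := hps.notMem_vars_head ⟨q, hq, hx⟩
    h₁.eq_var x (by simpa using hx'.1) (by simpa using hx'.2)

lemma IsLinearProblem.disjoint_vars_lhsVars_tail {x : ℕ}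
    (hx : x ∉ lhsVars ((u₀, v₀) :: tail)) : Disjoint (vars (θ₁ x)) (lhsVars tail) := by
  refine Set.disjoint_left.2 fun z hz hzt => ?_
  have := h₁.vars_subset x hz
  simp only [lhsVars_cons, lhsVars_nil, rhsVars_cons, rhsVars_nil, Set.union_empty,
    Set.mem_insert_iff, Set.mem_union] at this hx
  rcases this with rfl | h | h
  · exact hx (Or.inr hzt)
  · exact (hps.notMem_vars_head hzt).1 h
  · exact (hps.notMem_vars_head hzt).2 h

lemma IsLinearProblem.map_subst_tail :
    IsLinearProblem (tail.map (Prod.map id (subst θ₁))) where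
  linear q hq := by
    obtain ⟨q, hq', rfl⟩ := List.mem_map.1 hq
    exact hps.linear q (List.mem_cons_of_mem _ hq')
  pairwise_disjoint := List.pairwise_map.2 (List.pairwise_cons.1 hps.pairwise_disjoint).2
  disjoint := by
    rw [lhsVars_map_prodMap_id]
    refine Set.disjoint_left.2 fun x hx hx' => ?_
    rcases rhsVars_map_subst_subset h₁ hx' with h | h
    · exact (hps.notMem_vars_head hx).1 h
    · exact hps.disjoint.ne_of_mem (by rw [lhsVars_cons]; exact Or.inr hx) h rfl

lemma IsLinearMGU.cons (h₂ : IsLinearMGU (tail.map (Prod.map id (subst θ₁))) θ₂) :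
    IsLinearMGU ((u₀, v₀) :: tail) (fun x => subst θ₂ (θ₁ x)) where
  unifies q hq := by
    rw [← subst_subst, ← subst_subst]
    rcases List.mem_cons.1 hq with rfl | hq
    · exact congrArg (subst θ₂) (h₁.unifies _ List.mem_cons_self)
    · rw [hps.subst_fst_of_mem_tail h₁ hq]
      exact h₂.unifies _ (List.mem_map_of_mem hq)
  absorb μ hμ x := by
    rw [h₂.subst_subst_of_unifies (Unifies.map_subst_tail h₁ hμ),
      h₁.absorb μ (fun q hq => hμ q (by simp_all))]
  eq_var x hxl hxr := by
    simp only [lhsVars_cons, rhsVars_cons, Set.mem_union, not_or] at hxl hxr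
    rw [h₁.eq_var x (by simpa using hxl.1) (by simpa using hxr.1)]
    refine h₂.eq_var x (by simpa using hxl.2) fun hx => ?_
    rcases rhsVars_map_subst_subset h₁ hx with h | h
    · exact hxl.1 h
    · simp only [rhsVars_cons, Set.mem_union] at h
      tauto
  vars_subset x y hy := by
    obtain ⟨z, hz, hyz⟩ := mem_vars_subst.1 hy
    have hz := h₁.vars_subset x hz
    have hy := h₂.vars_subset z hyz
    simp only [Set.mem_insert_iff, Set.mem_union, lhsVars_map_prodMap_id] at hy
    have hmap := fun h : y ∈ rhsVars (tail.map (Prod.map id (subst θ₁))) =>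
      rhsVars_map_subst_subset h₁ h
    simp only [lhsVars_cons, lhsVars_nil, rhsVars_cons, rhsVars_nil, Set.union_empty,
      Set.mem_insert_iff, Set.mem_union] at hz hmap ⊢
    grind
  linear x hx := by
    refine h₂.linear_subst (h₁.linear x ?_) ?_
    · simp_all
    · rw [lhsVars_map_prodMap_id]
      exact hps.disjoint_vars_lhsVars_tail h₁ hx
  disjoint x y hx hy hxy := by
    refine h₂.disjoint_vars_subst ?_ ?_ (h₁.disjoint x y ?_ ?_ hxy) <;>
      simp_all [hps.disjoint_vars_lhsVars_tail h₁]

end Cons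

section Decompose

variable {f : F.Sym} {a b : Fin (F.arity f).length → GTerm F} {tail : List (GTerm F × GTerm F)}

lemma unifies_app_cons_iff {μ : ℕ → GTerm F} :
    Unifies μ ((app f a, app f b) :: tail) ↔
      Unifies μ (List.ofFn (fun j => (a j, b j)) ++ tail) := by
  simp [Unifies, funext_iff, List.mem_ofFn, or_imp, forall_and]

lemma lhsVars_ofFn_append :
    lhsVars (List.ofFn (fun j => (a j, b j)) ++ tail) = lhsVars ((app f a, app f b) :: tail) := by
  ext
  simp only [lhsVars, List.mem_append, List.mem_ofFn, Prod.exists, Prod.mk.injEq,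
    exists_and_right, Set.mem_ofPred_eq, List.mem_cons, exists_eq_or_imp, vars_app,
    Set.mem_iUnion]
  aesop

lemma rhsVars_ofFn_append :
    rhsVars (List.ofFn (fun j => (a j, b j)) ++ tail) = rhsVars ((app f a, app f b) :: tail) := by
  ext
  simp only [rhsVars, List.mem_append, List.mem_ofFn, Prod.exists, Prod.mk.injEq,
    Set.mem_ofPred_eq, List.mem_cons, exists_eq_or_imp, vars_app, Set.mem_iUnion]
  aesop

lemma IsLinearProblem.ofFn_append (hps : IsLinearProblem ((app f a, app f b) :: tail)) :
    IsLinearProblem (List.ofFn (fun j => (a j, b j)) ++ tail) where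
  linear q hq := by
    rcases List.mem_append.1 hq with hq | hq
    · obtain ⟨j, rfl⟩ := List.mem_ofFn.1 hq
      exact (hps.linear _ List.mem_cons_self).arg j
    · exact hps.linear q (List.mem_cons_of_mem _ hq)
  pairwise_disjoint := by
    obtain ⟨hhead, htail⟩ := List.pairwise_cons.1 hps.pairwise_disjoint
    refine List.pairwise_append.2 ⟨List.pairwise_ofFn.2 fun i j hij => ?_, htail, ?_⟩
    · exact (hps.linear _ List.mem_cons_self).disjoint_vars_args hij.ne
    · intro q hq q' hq'
      obtain ⟨j, rfl⟩ := List.mem_ofFn.1 hq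
      exact (hhead q' hq').mono_left (Set.subset_iUnion (fun j => vars (a j)) j)
  disjoint := lhsVars_ofFn_append ▸ rhsVars_ofFn_append ▸ hps.disjoint

end Decompose

def problemSize (ps : List (GTerm F × GTerm F)) : ℕ := (ps.map fun q => size q.1).sum

@[simp] lemma problemSize_cons (q : GTerm F × GTerm F) (ps : List (GTerm F × GTerm F)) :
    problemSize (q :: ps) = size q.1 + problemSize ps := by
  simp [problemSize]

@[simp] lemma problemSize_map_prodMap_id (g : GTerm F → GTerm F)
    (ps : List (GTerm F × GTerm F)) : problemSize (ps.map (Prod.map id g)) = problemSize ps := by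
  simp [problemSize, Function.comp_def]

theorem exists_isLinearMGU {ps : List (GTerm F × GTerm F)} (hps : IsLinearProblem ps)
    (hunif : ∃ μ, Unifies μ ps) : ∃ θ, IsLinearMGU ps θ := by
  induction hn : problemSize ps using Nat.strong_induction_on generalizing ps with
  | _ n ih =>
  rcases ps with _ | ⟨⟨u₀, v₀⟩, tail⟩
  · exact ⟨var, isLinearMGU_nil⟩
  obtain ⟨μ, hμ⟩ := hunif
  have of_head : ∀ θ₁, IsLinearMGU [(u₀, v₀)] θ₁ → ∃ θ, IsLinearMGU ((u₀, v₀) :: tail) θ := by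
    intro θ₁ h₁
    have hsize : problemSize (tail.map (Prod.map id (subst θ₁))) < n := by
      simp only [problemSize_map_prodMap_id, ← hn, problemSize_cons]
      have := one_le_size u₀
      omega
    obtain ⟨θ₂, h₂⟩ := ih _ hsize (hps.map_subst_tail h₁) ⟨μ, hμ.map_subst_tail h₁⟩ rfl
    exact ⟨_, IsLinearMGU.cons hps h₁ h₂⟩
  have hdisj : ∀ x ∈ vars u₀, x ∉ vars v₀ := fun x hu hv =>
    hps.disjoint.ne_of_mem (a := x) (b := x) (by rw [lhsVars_cons]; exact Or.inl hu)
      (by rw [rhsVars_cons]; exact Or.inl hv) rfl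
  rcases u₀ with x | ⟨f, a⟩
  · exact of_head _ (isLinearMGU_var_left (hdisj x rfl))
  rcases v₀ with y | ⟨g, b⟩
  · exact of_head _ (isLinearMGU_var_right (hps.linear _ List.mem_cons_self)
      fun hy => hdisj y hy rfl)
  have hhead := hμ _ List.mem_cons_self
  simp only [subst_app] at hhead
  obtain ⟨rfl, -⟩ := app.inj hhead
  have hsize : problemSize (List.ofFn (fun j => (a j, b j)) ++ tail) < n := by
    simp [← hn, problemSize, size, Function.comp_def, List.sum_ofFn]
  obtain ⟨θ, hθ⟩ := ih _ hsize hps.ofFn_append ⟨μ, unifies_app_cons_iff.1 hμ⟩ rfl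
  exact ⟨θ, hθ.congr (fun _ => unifies_app_cons_iff.symm) lhsVars_ofFn_append
    rhsVars_ofFn_append⟩

lemma IsLinearMGU.isMGU {u v : GTerm F} {θ : ℕ → GTerm F} (h : IsLinearMGU [(u, v)] θ) :
    IsMGU θ u v :=
  ⟨h.unifies _ List.mem_cons_self,
    fun τ hτ => ⟨τ, h.absorb τ (by simpa [Unifies, IsUnifier] using hτ)⟩⟩

theorem exists_isLinearMGU_pair {u v : GTerm F} (hu : Linear u)
    (hd : Disjoint (vars u) (vars v)) (hunif : ∃ μ, IsUnifier μ u v) :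
    ∃ θ, IsLinearMGU [(u, v)] θ :=
  exists_isLinearMGU ⟨by simpa using hu, List.pairwise_singleton _ _, by simpa using hd⟩
    (by simpa [Unifies, IsUnifier] using hunif)

lemma mem_vars_subst_renameBy {π : ℕ → ℕ} {w : GTerm F} {y : ℕ} :
    y ∈ vars (subst (renameBy π) w) ↔ ∃ x ∈ vars w, π x = y := by
  simp [mem_vars_subst, renameBy, eq_comm]

lemma subst_subst_renameBy (μ : ℕ → GTerm F) (π : ℕ → ℕ) (w : GTerm F) :
    subst μ (subst (renameBy π) w) = subst (μ ∘ π) w :=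
  subst_subst _ _ _

lemma Linear.subst_renameBy {w : GTerm F} (hw : Linear w) {π : ℕ → ℕ}
    (hπ : Function.Injective π) : Linear (subst (renameBy π) w) :=
  hw.subst_of_disjoint (fun _ _ => linear_var _) fun x _ y _ hxy => by
    simpa [renameBy] using hπ.ne hxy

lemma exists_renaming_apart (t : GTerm F) (τ σ : ℕ → GTerm F) :
    ∃ π : ℕ → ℕ, Function.Injective π ∧ (∀ x, π x ∉ vars t) ∧
      ∃ μ : ℕ → GTerm F, (∀ x ∈ vars t, μ x = τ x) ∧ μ ∘ π = σ := by
  obtain ⟨N, hN⟩ := exists_lt_of_mem_vars t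
  refine ⟨(· + N), add_left_injective N, fun x hx => (hN _ hx).not_ge (Nat.le_add_left N x),
    fun y => if N ≤ y then σ (y - N) else τ y, fun x hx => if_neg (hN x hx).not_ge, ?_⟩
  funext x
  simp

end GTerm

section Lifting

open GTerm

variable {Ω : Type*} {F : GradedSig Ω}

theorem exists_narrow_of_rew_at_funPos {R : Set (GTerm F × Ω × GTerm F)}
    (hRL : ∀ l ε r, (l, ε, r) ∈ R → GTerm.Linear r) {t : GTerm F} (ht : t.Linear)
    {p : List ℕ} {f : F.Sym} {args : Fin (F.arity f).length → GTerm F}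
    (hp : subtermAt t p = some (app f args)) {l r : GTerm F} {δ : Ω} (hrule : (l, δ, r) ∈ R)
    {τ σ : ℕ → GTerm F} (hred : subst τ (app f args) = subst σ l) :
    ∃ θ t' μ, Narrow R θ (gradeAt t p δ) t t' ∧ t'.Linear ∧
      subst μ t' = replaceAt (subst τ t) p (subst σ r) := by
  obtain ⟨π, hπ, hfresh, μ, hμt, hμπ⟩ := exists_renaming_apart t τ σ
  set l' := subst (renameBy π) l
  set r' := subst (renameBy π) r
  have hfresh' (w : GTerm F) : Disjoint (vars (subst (renameBy π) w)) (vars t) :=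
    Set.disjoint_left.2 fun y hy hyt => by
      obtain ⟨x, -, rfl⟩ := mem_vars_subst_renameBy.1 hy
      exact hfresh x hyt
  have hut := vars_subset_of_subtermAt hp
  have hunif : IsUnifier μ (app f args) l' := by
    rw [IsUnifier, subst_congr fun x hx => hμt x (hut hx), hred, subst_subst_renameBy, hμπ]
  obtain ⟨θ, hθ⟩ := exists_isLinearMGU_pair (ht.subterm hp)
    ((hfresh' l).mono_right hut).symm ⟨μ, hunif⟩
  have hstep : StepOK R t ⟨p, l', r', δ, θ⟩ :=
    ⟨⟨f, args, hp⟩, ⟨l, r, π, hπ, hrule, rfl, rfl,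
      Set.disjoint_iff_inter_eq_empty.1 ((hfresh' l).union_left (hfresh' r))⟩, ⟨_, hp, hθ.isMGU⟩⟩
  have hlin : Linear (subst θ (replaceAt t p r')) := by
    refine hθ.linear_subst (ht.replaceAt_of_disjoint ((hRL l δ r hrule).subst_renameBy hπ)
      (hfresh' r).symm p) (Set.disjoint_left.2 fun x hx hxu => ?_)
    simp only [lhsVars_cons, lhsVars_nil, Set.union_empty] at hxu
    rcases ht.mem_vars_replaceAt hp hx with h | h
    · exact (hfresh' r).ne_of_mem h (hut hxu) rfl
    · exact h.2 hxu
  refine ⟨θ, _, μ, ⟨_, hstep, rfl, rfl, rfl⟩, hlin, ?_⟩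
  show subst μ (subst θ (replaceAt t p r')) = _
  rw [hθ.subst_subst_of_unifies (by simpa [Unifies, IsUnifier] using hunif),
    subst_replaceAt hp, subst_congr hμt, subst_subst_renameBy, hμπ]

theorem RewStar.exists_narrowStar [Monoid Ω] [CompleteLattice Ω] [IsQuantale Ω]
    (hΩ : (1 : Ω) = ⊤) {R : Set (GTerm F × Ω × GTerm F)}
    (hRL : ∀ l ε r, (l, ε, r) ∈ R → GTerm.Linear r) {ε : Ω} {X s : GTerm F}
    (h : RewStar R ε X s) {t : GTerm F} (ht : t.Linear) {τ : ℕ → GTerm F}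
    (hX : subst τ t = X) :
    ∃ (σ : ℕ → GTerm F) (δ : Ω) (s' : GTerm F) (χ : ℕ → GTerm F),
      NarrowStar R σ δ t s' ∧ ε ≤ δ ∧ subst χ s' = s := by
  induction h generalizing t τ with
  | refl => exact ⟨var, 1, t, τ, .refl t, le_rfl, hX⟩
  | step hstep _ ih =>
    subst hX
    obtain ⟨l, δ₀, r, σ, p, hrule, hred, rfl, rfl⟩ := hstep
    rcases subtermAt_subst_eq_some hred with ⟨f, args, hp⟩ | ⟨p₁, p₂, x, rfl, hx, -⟩
    · obtain ⟨θ, t', μ, hnarrow, ht', hμ⟩ := exists_narrow_of_rew_at_funPos hRL ht hp hrule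
        (by simpa [subtermAt_subst τ hp] using hred)
      obtain ⟨σ', δ, s', χ, hstar, hle, hχ⟩ := ih ht' hμ
      refine ⟨_, _, s', χ, .step hnarrow hstar, ?_, hχ⟩
      rw [gradeAt_subst hp]
      exact mul_le_mul_right hle _
    · 
      obtain ⟨σ', δ, s', χ, hstar, hle, hχ⟩ := ih ht (ht.replaceAt_subst_of_var hx τ p₂ _).symm
      exact ⟨σ', δ, s', χ, hstar, (mul_le_of_le_one_left' (hΩ ▸ le_top)).trans hle, hχ⟩

end Lifting

theorem narrowing_lifting_general {Ω : Type*} [CommMonoid Ω] [CompleteLattice Ω] [IsQuantale Ω]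
    (hΩ : Lawverean Ω) {F : GradedSig Ω}
    (R : Set (GTerm F × Ω × GTerm F))
    (hRL : ∀ l ε r, (l, ε, r) ∈ R → GTerm.Linear r)
    {t : GTerm F} (hlin : t.Linear) (τ : ℕ → GTerm F) {ε : Ω} {s : GTerm F}
    (h : RewStar R ε (GTerm.subst τ t) s) :
    ∃ (σ : ℕ → GTerm F) (δ : Ω) (s' : GTerm F) (χ : ℕ → GTerm F),
      NarrowStar R σ δ t s' ∧ ε ≤ δ ∧ GTerm.subst χ s' = s :=
  RewStar.exists_narrowStar hΩ.1 hRL h hlin rfl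

/-- Lifting lemma for ordinary graded narrowing: let `R` be a right-linear `(Ω,Φ)`-TRS
over a Lawverean quantale, `t` a linear term, and `τ` a substitution. If `tτ →*_{R,ε} s`,
then there exists a narrowing derivation `t ⤳*_{R,σ,δ} s'` with `δ ≽ ε` and `s'` an
instance-generalization of `s`, i.e. `s'χ = s` for some substitution `χ`. -/
theorem narrowing_lifting {Ω : Type*} [CommMonoid Ω] [CompleteLattice Ω] [IsQuantale Ω]
    (hΩ : Lawverean Ω) {F : GradedSig Ω} (hF : F.IsCBESig)
    (R : Set (GTerm F × Ω × GTerm F)) (hR : IsTRS R)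
    (hRL : ∀ l ε r, (l, ε, r) ∈ R → GTerm.Linear r)
    {t : GTerm F} (hlin : t.Linear) (τ : ℕ → GTerm F) {ε : Ω} {s : GTerm F}
    (h : RewStar R ε (GTerm.subst τ t) s) :
    ∃ (σ : ℕ → GTerm F) (δ : Ω) (s' : GTerm F) (χ : ℕ → GTerm F),
      NarrowStar R σ δ t s' ∧ ε ≤ δ ∧ GTerm.subst χ s' = s :=
  narrowing_lifting_general hΩ R hRL hlin τ h
end
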